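/- The function f(p) = (1/2)·(−p ln p − (1−p) ln(1−p) + (1−p)^3 ln 2) on (0,1) attains a maximum value strictly greater than 0.4279. -/
import Mathlib


/-- The binary entropy function. -/
noncomputable def hB (p : ℝ) : ℝ := -p * Real.log p - (1 - p) * Real.log (1 - p)

private lemma exp_half_lt : Real.exp 0.7570635 < 2.13200639 := by
  have h := Real.exp_bound' (x := 0.7570635) (by norm_num) (by norm_num) (n := 12) (by norm_num)
  refine lt_of_le_of_lt h ?_
  simp only [Finset.sum_range_succ, Finset.sum_range_zero]
  norm_num [Nat.factorial]

private lemma exp_lt_1 : Real.exp 1.514127 < 50 / 11 := by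
  have : (1.514127 : ℝ) = 0.7570635 + 0.7570635 := by norm_num
  rw [this, Real.exp_add]
  have h := exp_half_lt
  have h0 := Real.exp_pos (0.7570635 : ℝ)
  nlinarith

private lemma exp_lt_2 : Real.exp 0.248461 < 50 / 39 := by
  have h := Real.exp_bound' (x := 0.248461) (by norm_num) (by norm_num) (n := 10) (by norm_num)
  refine lt_of_le_of_lt h ?_
  simp only [Finset.sum_range_succ, Finset.sum_range_zero]
  norm_num [Nat.factorial]

private lemma log_lb_1 : (1.514127 : ℝ) < Real.log (50 / 11) :=
  (Real.lt_log_iff_exp_lt (by norm_num)).2 exp_lt_1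

private lemma log_lb_2 : (0.248461 : ℝ) < Real.log (50 / 39) :=
  (Real.lt_log_iff_exp_lt (by norm_num)).2 exp_lt_2

private lemma key_value : (0.4279 : ℝ) <
    (1 / 2) * (hB (11 / 50) + (1 - 11 / 50) ^ 3 * Real.log 2) := by
  have h1 : Real.log (11 / 50 : ℝ) = -Real.log (50 / 11) := by
    rw [← Real.log_inv]; norm_num
  have h2 : Real.log (39 / 50 : ℝ) = -Real.log (50 / 39) := by
    rw [← Real.log_inv]; norm_num
  have hl1 := log_lb_1
  have hl2 := log_lb_2
  have hl3 := Real.log_two_gt_d9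
  have e : (1 - 11 / 50 : ℝ) = 39 / 50 := by norm_num
  rw [e]
  unfold hB
  rw [show (1 - 11/50 : ℝ) = 39/50 by norm_num, h1, h2]
  nlinarith

private lemma hB_zero : hB 0 = 0 := by simp [hB]

private lemma hB_one : hB 1 = 0 := by simp [hB]

theorem max_first_lower_bound_honeycomb :
    ∃ p ∈ Set.Ioo (0 : ℝ) 1,
      (∀ q ∈ Set.Ioo (0 : ℝ) 1,
        (1 / 2) * (hB q + (1 - q) ^ 3 * Real.log 2) ≤
          (1 / 2) * (hB p + (1 - p) ^ 3 * Real.log 2)) ∧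
      0.4279 < (1 / 2) * (hB p + (1 - p) ^ 3 * Real.log 2) := by
  set F : ℝ → ℝ := fun q => (1 / 2) * (hB q + (1 - q) ^ 3 * Real.log 2) with hF
  have hcont : Continuous F := by
    have h1 : Continuous fun q : ℝ => q * Real.log q := Real.continuous_mul_log
    have h2 : Continuous fun q : ℝ => (1 - q) * Real.log (1 - q) :=
      Real.continuous_mul_log.comp (continuous_const.sub continuous_id)
    have hhB : Continuous hB := by
      have : hB = fun q => -(q * Real.log q) - (1 - q) * Real.log (1 - q) := by
        funext q; unfold hB; ring
      rw [this]; exact (h1.neg).sub h2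
    fun_prop
  obtain ⟨p, hpmem, hpmax⟩ := (isCompact_Icc (a := (0:ℝ)) (b := 1)).exists_isMaxOn
    (Set.nonempty_Icc.2 (by norm_num)) hcont.continuousOn
  have hmem1150 : (11/50 : ℝ) ∈ Set.Icc (0:ℝ) 1 := by constructor <;> norm_num
  have hkey : (0.4279 : ℝ) < F (11/50) := key_value
  have hFp : (0.4279 : ℝ) < F p := lt_of_lt_of_le hkey (hpmax hmem1150)
  have hF0 : F 0 < 0.4279 := by
    have := Real.log_two_lt_d9
    simp only [hF, hB_zero]
    norm_num
    nlinarith [Real.log_two_lt_d9]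
  have hF1 : F 1 < 0.4279 := by
    simp only [hF, hB_one]
    norm_num
  have hp0 : p ≠ 0 := by rintro rfl; linarith
  have hp1 : p ≠ 1 := by rintro rfl; linarith
  refine ⟨p, ⟨lt_of_le_of_ne hpmem.1 (Ne.symm hp0), lt_of_le_of_ne hpmem.2 hp1⟩, ?_, hFp⟩
  intro q hq
  exact hpmax (Set.mem_Icc_of_Ioo hq)
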